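/- There is an absolute constant C > 0 such that for every real N ≥ 2, ∫_0^{N^{1/2}} |S(x;N)|² dx ≤ C·N^{3/2}·log N. -/

import Mathlib

open MeasureTheory

/-- The exponential sum `S(x; N) = Σ_{N < n ≤ 2N} e(x√n)`. -/
noncomputable def expSum (x N : ℝ) : ℂ :=
  ∑ n ∈ Finset.Ioc ⌊N⌋₊ ⌊2 * N⌋₊,
    Complex.exp (2 * Real.pi * x * Real.sqrt n * Complex.I)

/-!
Expanding the square, `|S(x;N)|² = ∑_{n,m} cos (2π(√n - √m)x)`. On `[0, √N]` each diagonal term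
integrates to `√N`, and an off-diagonal one to at most `1/(2π|√n - √m|) ≤ √N/|n - m|`, because
`|n - m| = |√n - √m| (√n + √m)` with `√n + √m ≤ 2√(2N)`. For fixed `n` the sum of `1/|n - m|` is at
most twice a harmonic number, hence `O(log N)`, and there are at most `2N` values of `n`.
-/

open Finset Real

theorem integral_cos_mul_le_inv_abs {c : ℝ} (hc : c ≠ 0) (X : ℝ) :
    ∫ x in (0 : ℝ)..X, cos (c * x) ≤ |c|⁻¹ := by
  rw [intervalIntegral.integral_comp_mul_left cos hc, mul_zero, integral_cos, sin_zero,
    sub_zero, smul_eq_mul, ← abs_inv]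
  calc c⁻¹ * sin (c * X) ≤ |c⁻¹ * sin (c * X)| := le_abs_self _
    _ ≤ |c⁻¹| := by
      rw [abs_mul]
      exact mul_le_of_le_one_right (abs_nonneg _) (abs_sin_le_one _)

section ExpSumMeanValue

variable {ι : Type*} (s : Finset ι) (ω : ι → ℝ)

theorem norm_sum_exp_sq_eq_sum_sum_cos (x : ℝ) :
    ‖∑ i ∈ s, Complex.exp (2 * π * x * ω i * Complex.I)‖ ^ 2 =
      ∑ i ∈ s, ∑ j ∈ s, cos (2 * π * (ω i - ω j) * x) := by
  rw [← Complex.ofReal_re (_ ^ 2), Complex.ofReal_pow, ← Complex.mul_conj', map_sum, sum_mul_sum,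
    Complex.re_sum]
  refine sum_congr rfl fun i _ => ?_
  rw [Complex.re_sum]
  refine sum_congr rfl fun j _ => ?_
  rw [← Complex.exp_conj, ← Complex.exp_add, ← Complex.exp_ofReal_mul_I_re]
  congr 2
  simp only [map_mul, Complex.conj_I, Complex.conj_ofReal, map_ofNat]
  push_cast
  ring

theorem integral_norm_sum_exp_sq_le [DecidableEq ι] (hω : Set.InjOn ω s) (X : ℝ) :
    ∫ x in (0 : ℝ)..X, ‖∑ i ∈ s, Complex.exp (2 * π * x * ω i * Complex.I)‖ ^ 2 ≤
      ∑ i ∈ s, (X + ∑ j ∈ s.erase i, (2 * π * |ω i - ω j|)⁻¹) := by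
  have hint (i j : ι) : IntervalIntegrable (fun x => cos (2 * π * (ω i - ω j) * x)) volume 0 X :=
    (by fun_prop : Continuous _).intervalIntegrable _ _
  simp_rw [norm_sum_exp_sq_eq_sum_sum_cos]
  rw [intervalIntegral.integral_finsetSum fun i _ =>
    (continuous_finsetSum _ fun j _ => by fun_prop).intervalIntegrable _ _]
  refine sum_le_sum fun i hi => ?_
  rw [intervalIntegral.integral_finsetSum fun j _ => hint i j, ← add_sum_erase _ _ hi]
  simp only [sub_self, mul_zero, zero_mul, cos_zero, intervalIntegral.integral_const, sub_zero,
    smul_eq_mul, mul_one]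
  gcongr with j hj
  have hne : ω i - ω j ≠ 0 :=
    sub_ne_zero.2 fun h => (ne_of_mem_erase hj) (hω hi (mem_of_mem_erase hj) h).symm
  have hc : 2 * π * (ω i - ω j) ≠ 0 := mul_ne_zero (by positivity) hne
  simpa only [abs_mul, abs_two, abs_of_pos pi_pos] using integral_cos_mul_le_inv_abs hc X

end ExpSumMeanValue

theorem abs_sub_le_two_sqrt_mul_abs_sqrt_sub {u v B : ℝ} (hu : 0 ≤ u) (hv : 0 ≤ v)
    (huB : u ≤ B) (hvB : v ≤ B) : |u - v| ≤ 2 * √B * |√u - √v| := by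
  have hfactor : u - v = (√u - √v) * (√u + √v) := by
    linear_combination sq_sqrt hv - sq_sqrt hu
  rw [hfactor, abs_mul, abs_of_nonneg (add_nonneg (sqrt_nonneg u) (sqrt_nonneg v)),
    mul_comm (2 * √B)]
  gcongr
  linarith [sqrt_le_sqrt huB, sqrt_le_sqrt hvB]

theorem inv_two_pi_abs_sqrt_sub_le {u v N : ℝ} (hu : 0 ≤ u) (hv : 0 ≤ v) (huN : u ≤ 2 * N)
    (hvN : v ≤ 2 * N) (huv : u ≠ v) : (2 * π * |√u - √v|)⁻¹ ≤ √N * |u - v|⁻¹ := by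
  have hsqrt : √u - √v ≠ 0 := sub_ne_zero.2 fun h => huv ((sqrt_inj hu hv).1 h)
  have hsqrt2 : √2 ≤ π := by nlinarith [sq_sqrt zero_le_two, sqrt_nonneg 2, pi_gt_three]
  rw [← div_eq_mul_inv, le_div_iff₀ (abs_pos.2 (sub_ne_zero.2 huv)),
    inv_mul_le_iff₀ (mul_pos (by positivity) (abs_pos.2 hsqrt))]
  calc |u - v| ≤ 2 * √(2 * N) * |√u - √v| := abs_sub_le_two_sqrt_mul_abs_sqrt_sub hu hv huN hvN
    _ ≤ 2 * π * |√u - √v| * √N := by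
      rw [sqrt_mul zero_le_two]
      nlinarith [mul_le_mul_of_nonneg_right hsqrt2 (by positivity : 0 ≤ √N * |√u - √v|)]

theorem sum_inv_le_harmonic {ι : Type*} {s : Finset ι} {φ : ι → ℕ} {K : ℕ}
    (hφ : Set.InjOn φ s) (hφs : ∀ i ∈ s, φ i ∈ Icc 1 K) :
    ∑ i ∈ s, ((φ i : ℝ))⁻¹ ≤ harmonic K := by
  rw [← sum_image (g := φ) (f := fun k : ℕ => ((k : ℝ))⁻¹) hφ, harmonic_eq_sum_Icc]
  push_cast
  exact sum_le_sum_of_subset_of_nonneg (image_subset_iff.2 hφs) fun _ _ _ => by positivity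

theorem sum_erase_inv_abs_sub_le_two_mul_harmonic {a b n : ℕ} (hn : n ∈ Ioc a b) :
    ∑ m ∈ (Ioc a b).erase n, |(n : ℝ) - m|⁻¹ ≤ 2 * harmonic (b - a) := by
  have hnatAbs (m : ℕ) : |(n : ℝ) - m| = (((n : ℤ) - m).natAbs : ℝ) := by simp
  simp_rw [hnatAbs]
  rw [← sum_filter_add_sum_filter_not _ (· < n), two_mul]
  gcongr <;>
  · refine sum_inv_le_harmonic (fun m hm m' hm' h => ?_) fun m hm => ?_ <;>
    simp only [coe_filter, Set.mem_ofPred_eq, mem_filter, mem_erase, mem_Ioc, mem_Icc] at * <;>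
    omega

theorem sum_erase_inv_two_pi_abs_sqrt_sub_le {N : ℝ} {a b n : ℕ} (hb : (b : ℝ) ≤ 2 * N)
    (hn : n ∈ Ioc a b) :
    ∑ m ∈ (Ioc a b).erase n, (2 * π * |√(n : ℝ) - √(m : ℝ)|)⁻¹ ≤
      √N * (2 * harmonic (b - a)) := by
  have hle {k : ℕ} (hk : k ∈ Ioc a b) : (k : ℝ) ≤ 2 * N :=
    (Nat.cast_le.2 (mem_Ioc.1 hk).2).trans hb
  calc ∑ m ∈ (Ioc a b).erase n, (2 * π * |√(n : ℝ) - √(m : ℝ)|)⁻¹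
      ≤ ∑ m ∈ (Ioc a b).erase n, √N * |(n : ℝ) - m|⁻¹ := by
        refine sum_le_sum fun m hm => inv_two_pi_abs_sqrt_sub_le (Nat.cast_nonneg _)
          (Nat.cast_nonneg _) (hle hn) (hle (mem_of_mem_erase hm)) ?_
        exact_mod_cast (ne_of_mem_erase hm).symm
    _ ≤ √N * (2 * harmonic (b - a)) := by
        rw [← mul_sum]
        exact mul_le_mul_of_nonneg_left (sum_erase_inv_abs_sub_le_two_mul_harmonic hn)
          (sqrt_nonneg N)

theorem expSum_mean_square :
    ∃ C : ℝ, 0 < C ∧ ∀ N : ℝ, 2 ≤ N →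
      (∫ x in (0 : ℝ)..(N ^ ((1 : ℝ) / 2)), ‖expSum x N‖ ^ 2) ≤
        C * N ^ ((3 : ℝ) / 2) * Real.log N := by
  refine ⟨18, by norm_num, fun N hN => ?_⟩
  have hN0 : 0 < N := by linarith
  set a := ⌊N⌋₊
  set b := ⌊2 * N⌋₊
  have hb : (b : ℝ) ≤ 2 * N := Nat.floor_le (by positivity)
  have hK : ((b - a : ℕ) : ℝ) ≤ 2 * N := (Nat.cast_le.2 (Nat.sub_le b a)).trans hb
  have hlogN : 0.69 ≤ log N := by
    linarith [log_two_gt_d9, log_le_log zero_lt_two hN]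
  have hharmonic : (harmonic (b - a) : ℝ) ≤ 1 + 2 * log N := by
    have hlogK : log (b - a : ℕ) ≤ log (2 * N) := by
      rcases (b - a).eq_zero_or_pos with h | h
      · rw [h, Nat.cast_zero, log_zero]
        exact log_nonneg (by linarith)
      · exact log_le_log (by exact_mod_cast h) hK
    rw [log_mul two_ne_zero hN0.ne'] at hlogK
    linarith [harmonic_le_one_add_log (b - a), log_le_log zero_lt_two hN]
  have hsqrt_inj : Set.InjOn (fun n : ℕ => √(n : ℝ)) (Ioc a b) := fun n _ m _ h => by
    exact_mod_cast (sqrt_inj (Nat.cast_nonneg n) (Nat.cast_nonneg m)).1 h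
  have h32 : N ^ ((3 : ℝ) / 2) = N * √N := by
    rw [show (3 : ℝ) / 2 = 1 + 1 / 2 by norm_num, rpow_add hN0, rpow_one, ← sqrt_eq_rpow]
  rw [← sqrt_eq_rpow, h32]
  calc ∫ x in (0 : ℝ)..√N, ‖expSum x N‖ ^ 2
      ≤ ∑ n ∈ Ioc a b, (√N + ∑ m ∈ (Ioc a b).erase n, (2 * π * |√(n : ℝ) - √(m : ℝ)|)⁻¹) :=
        integral_norm_sum_exp_sq_le _ _ hsqrt_inj _
    _ ≤ ∑ n ∈ Ioc a b, (√N + √N * (2 * (1 + 2 * log N))) := by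
        gcongr with n hn
        exact (sum_erase_inv_two_pi_abs_sqrt_sub_le hb hn).trans (by gcongr)
    _ = ((b - a : ℕ) : ℝ) * (√N * (3 + 4 * log N)) := by
        rw [sum_const, Nat.card_Ioc, nsmul_eq_mul]
        ring
    _ ≤ 2 * N * (√N * (9 * log N)) := by
        gcongr
        linarith
    _ = 18 * (N * √N) * log N := by ring
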